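/- arXiv:quant-ph/0601010 — 5 statements merged into one kernel-verified Lean document; each statement's English description precedes it below -/
import Mathlib

section
/- Let p_1 ≥ ⋯ ≥ p_m > 0, let {Π_i}_{i=1}^m be a POVM on ℂ^n with n ≤ m, and let ρ_i be density matrices. Then the probability of correct detection Σ_{i=1}^m p_i Tr(Π_i ρ_i) ≤ Σ_{i=1}^n p_i. -/
/-!
Put `t i = Tr (Π i * ρ i)`. Positivity of traces of products of positive semidefinite matrices
gives `0 ≤ t i ≤ Tr (ρ i) = 1`, and `ρ i ≤ 1` in the Loewner order gives
`∑ t i ≤ ∑ Tr (Π i) = n`. Maximizing `∑ p i * t i` under these constraints is a bathtub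
problem: for non-increasing `p` the optimum fills the first `n` slots, which one sees by
comparing every weight with the threshold `c = p n`.
-/

open Matrix ComplexOrder
open scoped MatrixOrder

open Finset in
theorem Finset.sum_mul_le_sum_of_threshold {ι R : Type*} [Fintype ι] [CommRing R]
    [PartialOrder R] [IsOrderedRing R] (S : Finset ι) {p t : ι → R} {c : R} (hc : 0 ≤ c)
    (hpS : ∀ i ∈ S, c ≤ p i) (hpSc : ∀ i ∉ S, p i ≤ c)
    (ht0 : ∀ i, 0 ≤ t i) (ht1 : ∀ i, t i ≤ 1) (hts : ∑ i, t i ≤ #S) :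
    ∑ i, p i * t i ≤ ∑ i ∈ S, p i := by
  classical
  have hin : ∑ i ∈ S, p i * t i ≤ ∑ i ∈ S, (p i + c * (t i - 1)) := by
    refine sum_le_sum fun i hi => sub_nonneg.mp ?_
    have := mul_nonneg (sub_nonneg.mpr (hpS i hi)) (sub_nonneg.mpr (ht1 i))
    linear_combination this
  have hout : ∑ i ∈ Sᶜ, p i * t i ≤ ∑ i ∈ Sᶜ, c * t i :=
    sum_le_sum fun i hi => mul_le_mul_of_nonneg_right (hpSc i (mem_compl.mp hi)) (ht0 i)
  calc ∑ i, p i * t i = ∑ i ∈ S, p i * t i + ∑ i ∈ Sᶜ, p i * t i :=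
        (sum_add_sum_compl S _).symm
    _ ≤ ∑ i ∈ S, (p i + c * (t i - 1)) + ∑ i ∈ Sᶜ, c * t i := add_le_add hin hout
    _ = ∑ i ∈ S, p i + c * (∑ i, t i - #S) := by
      rw [← sum_add_sum_compl S t]
      simp only [sum_add_distrib, ← mul_sum, sum_sub_distrib, sum_const, nsmul_one]
      ring
    _ ≤ ∑ i ∈ S, p i :=
      add_le_of_nonpos_right (mul_nonpos_of_nonneg_of_nonpos hc (sub_nonpos.mpr hts))

open Finset in
theorem Fin.sum_mul_le_sum_filter_val_lt {R : Type*} [CommRing R] [PartialOrder R]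
    [IsOrderedRing R] {m : ℕ} (n : ℕ) {p t : Fin m → R} (hp0 : ∀ i, 0 ≤ p i)
    (hp : Antitone p) (ht0 : ∀ i, 0 ≤ t i) (ht1 : ∀ i, t i ≤ 1) (hts : ∑ i, t i ≤ n) :
    ∑ i, p i * t i ≤ ∑ i ∈ univ.filter (fun i : Fin m => (i : ℕ) < n), p i := by
  rcases lt_or_ge n m with hnm | hmn
  · refine sum_mul_le_sum_of_threshold _ (c := p ⟨n, hnm⟩) (hp0 _) (fun i hi => ?_)
      (fun i hi => ?_) ht0 ht1 ?_
    · exact hp (Fin.mk_le_mk.mpr (mem_filter.mp hi).2.le)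
    · exact hp (Fin.mk_le_mk.mpr (not_lt.mp fun h => hi (mem_filter.mpr ⟨mem_univ i, h⟩)))
    · rwa [Fin.card_filter_val_lt, min_eq_right hnm.le]
  · rw [filter_true_of_mem fun i _ => i.2.trans_le hmn]
    exact sum_le_sum fun i _ => mul_le_of_le_one_right (hp0 i) (ht1 i)

namespace Matrix

variable {𝕜 n : Type*} [RCLike 𝕜] [Fintype n]

theorem PosSemidef.trace_mul_nonneg {A B : Matrix n n 𝕜} (hA : A.PosSemidef)
    (hB : B.PosSemidef) : 0 ≤ (A * B).trace := by
  classical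
  have hS : (CFC.sqrt A)ᴴ = CFC.sqrt A := (CFC.sqrt_nonneg A).isSelfAdjoint
  rw [← CFC.sqrt_mul_sqrt_self A hA.nonneg, Matrix.mul_assoc, trace_mul_comm]
  simpa only [hS] using (hB.mul_mul_conjTranspose_same (CFC.sqrt A)).trace_nonneg

theorem PosSemidef.le_re_trace_smul_one [DecidableEq n] {A : Matrix n n 𝕜}
    (hA : A.PosSemidef) : A ≤ RCLike.re A.trace • (1 : Matrix n n 𝕜) := by
  rw [← Algebra.algebraMap_eq_smul_one]
  refine le_algebraMap_of_spectrum_le (fun x hx => ?_) hA.isHermitian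
  obtain ⟨i, rfl⟩ := hA.1.spectrum_real_eq_range_eigenvalues ▸ hx
  rw [hA.1.trace_eq_sum_eigenvalues, ← RCLike.ofReal_sum, RCLike.ofReal_re]
  exact Finset.single_le_sum (fun j _ => hA.eigenvalues_nonneg j) (Finset.mem_univ i)

theorem trace_mul_le_trace_of_le_one [DecidableEq n] {A B : Matrix n n 𝕜}
    (hA : A.PosSemidef) (hB : B ≤ 1) : (A * B).trace ≤ A.trace := by
  simpa [Matrix.mul_sub, trace_sub] using hA.trace_mul_nonneg (le_iff.mp hB)

end Matrix

theorem correct_detection_le_pseudo_classical_general {n m : ℕ}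
    (p : Fin m → ℝ) (hp_pos : ∀ i, 0 < p i)
    (hp_mono : ∀ i j : Fin m, i ≤ j → p j ≤ p i)
    (Pi : Fin m → Matrix (Fin n) (Fin n) ℂ) (hPi : ∀ i, (Pi i).PosSemidef)
    (hPisum : ∑ i, Pi i = 1)
    (ρ : Fin m → Matrix (Fin n) (Fin n) ℂ) (hρ : ∀ i, (ρ i).PosSemidef)
    (hρtr : ∀ i, (ρ i).trace = 1) :
    ∑ i, (p i : ℂ) * (Pi i * ρ i).trace ≤
      ((∑ i ∈ Finset.univ.filter (fun i : Fin m => (i : ℕ) < n), p i : ℝ) : ℂ) := by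
  have hPi_le_one (i : Fin m) : Pi i ≤ 1 :=
    hPisum ▸ Finset.single_le_sum (fun j _ => (hPi j).nonneg) (Finset.mem_univ i)
  have hρ_le_one (i : Fin m) : ρ i ≤ 1 := by
    simpa [hρtr i] using (hρ i).le_re_trace_smul_one
  have ht1 (i : Fin m) : (Pi i * ρ i).trace ≤ 1 := by
    rw [trace_mul_comm, ← hρtr i]
    exact trace_mul_le_trace_of_le_one (hρ i) (hPi_le_one i)
  have hts : ∑ i, (Pi i * ρ i).trace ≤ n := calc
    ∑ i, (Pi i * ρ i).trace ≤ ∑ i, (Pi i).trace :=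
      Finset.sum_le_sum fun i _ => trace_mul_le_trace_of_le_one (hPi i) (hρ_le_one i)
    _ = n := by rw [← trace_sum, hPisum, trace_one, Fintype.card_fin]
  push_cast
  exact Fin.sum_mul_le_sum_filter_val_lt n (fun i => Complex.zero_le_real.mpr (hp_pos i).le)
    (fun i j hij => Complex.real_le_real.mpr (hp_mono i j hij))
    (fun i => (hPi i).trace_mul_nonneg (hρ i)) ht1 hts

/-- For non-increasing positive priors, any POVM and any density matrices on ℂ^n
with `n ≤ m`, the probability of correct detection is at most `Σ_{i<n} p i`. -/
theorem correct_detection_le_pseudo_classical {n m : ℕ} (hnm : n ≤ m)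
    (p : Fin m → ℝ) (hp_pos : ∀ i, 0 < p i)
    (hp_mono : ∀ i j : Fin m, i ≤ j → p j ≤ p i)
    (Pi : Fin m → Matrix (Fin n) (Fin n) ℂ) (hPi : ∀ i, (Pi i).PosSemidef)
    (hPisum : ∑ i, Pi i = 1)
    (ρ : Fin m → Matrix (Fin n) (Fin n) ℂ) (hρ : ∀ i, (ρ i).PosSemidef)
    (hρtr : ∀ i, (ρ i).trace = 1) :
    ∑ i, (p i : ℂ) * (Pi i * ρ i).trace ≤
      ((∑ i ∈ Finset.univ.filter (fun i : Fin m => (i : ℕ) < n), p i : ℝ) : ℂ) :=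
  correct_detection_le_pseudo_classical_general p hp_pos hp_mono Pi hPi hPisum ρ hρ hρtr
end

section
/- If u_1,…,u_n are n vectors in ℂ^n satisfying Σ_{i=1}^n |u_i⟩⟨u_i| = I, then {u_i} is an orthonormal basis of ℂ^n. -/
open Matrix

/-- `n` vectors in ℂ^n whose outer products sum to the identity form an
orthonormal basis. -/
theorem tight_frame_card_eq_dim_orthonormal {n : ℕ} (u : Fin n → (Fin n → ℂ))
    (hu : ∑ i, vecMulVec (u i) (star (u i)) = 1) :
    ∀ i j, star (u i) ⬝ᵥ u j = if i = j then 1 else 0 := by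
  set A : Matrix (Fin n) (Fin n) ℂ := of u with hA
  have h1 : Aᴴ * A = 1 := by
    ext j k
    have := congrFun (congrFun hu k) j
    simpa [Matrix.mul_apply, vecMulVec_apply, Matrix.sum_apply, mul_comm,
      conjTranspose_apply, one_apply, eq_comm, hA] using this
  have h2 : A * Aᴴ = 1 := mul_eq_one_comm.mp h1
  intro i j
  have := congrFun (congrFun h2 j) i
  simpa [Matrix.mul_apply, dotProduct, one_apply, eq_comm, mul_comm,
    conjTranspose_apply, hA] using this
end

section
/- Let p_1 ≥ ⋯ ≥ p_m > 0 with n ≤ m, and let u_1,…,u_m ∈ ℂ^n form a tight frame. If ‖u_i‖² = 1 for all i with p_i > p_n and ‖u_i‖² = 0 for all i with p_i < p_n, then Σ_{i=1}^m p_i ‖u_i‖² = Σ_{i=1}^n p_i. -/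
open Matrix

/-- The squared norm `⟨v, v⟩` of a vector in ℂ^n, as a real number. -/
noncomputable def nsq {n : ℕ} (v : Fin n → ℂ) : ℝ := (star v ⬝ᵥ v).re

/-- If a tight frame has unit vectors at indices with `p i > p n` and zero
vectors at indices with `p i < p n`, then it attains `Σ p i ‖u i‖² = Σ_{i<n} p i`. -/
theorem tfes_conditions_attain_optimum {n m : ℕ} (hnm : n ≤ m) (hn : 0 < n)
    (p : Fin m → ℝ) (hp_pos : ∀ i, 0 < p i)
    (hp_mono : ∀ i j : Fin m, i ≤ j → p j ≤ p i)
    (u : Fin m → (Fin n → ℂ))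
    (hu : ∑ i, vecMulVec (u i) (star (u i)) = 1)
    (h1 : ∀ i : Fin m, p ⟨n - 1, by omega⟩ < p i → nsq (u i) = 1)
    (h3 : ∀ i : Fin m, p i < p ⟨n - 1, by omega⟩ → nsq (u i) = 0) :
    ∑ i, p i * nsq (u i) =
      ∑ i ∈ Finset.univ.filter (fun i : Fin m => (i : ℕ) < n), p i := by
  set c : ℝ := p ⟨n - 1, by omega⟩ with hc
  -- trace: sum of nsq equals n
  have htr : ∑ i, nsq (u i) = (n : ℝ) := by
    have h := congrArg Matrix.trace hu
    rw [trace_sum, trace_one] at h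
    have h2 : ∀ i, trace (vecMulVec (u i) (star (u i))) = (nsq (u i) : ℂ) := by
      intro i
      have : trace (vecMulVec (u i) (star (u i))) = u i ⬝ᵥ star (u i) := rfl
      rw [this]
      have hdot : u i ⬝ᵥ star (u i) = star (u i) ⬝ᵥ u i := dotProduct_comm _ _
      rw [hdot]
      have hreal : star (u i) ⬝ᵥ u i = ((star (u i) ⬝ᵥ u i).re : ℂ) := by
        rw [Complex.ext_iff]
        constructor
        · simp
        · simp [dotProduct, Complex.im_sum]
          apply Finset.sum_eq_zero
          intro j _
          simp [Complex.mul_im, mul_comm]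
      rw [hreal]; rfl
    rw [Finset.sum_congr rfl (fun i _ => h2 i)] at h
    have := congrArg Complex.re h
    simpa using this
  -- p i > c implies i < n
  have hlt : ∀ i : Fin m, c < p i → (i : ℕ) < n := by
    intro i hi
    by_contra hge
    push_neg at hge
    exact absurd (hp_mono ⟨n - 1, by omega⟩ i (by simp [Fin.le_def]; omega)) (not_le.mpr hi)
  -- i < n implies c ≤ p i
  have hge : ∀ i : Fin m, (i : ℕ) < n → c ≤ p i := by
    intro i hi
    exact hp_mono i ⟨n - 1, by omega⟩ (by simp [Fin.le_def]; omega)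
  have hcard : (Finset.univ.filter (fun i : Fin m => (i : ℕ) < n)).card = n := by
    have : Finset.univ.filter (fun i : Fin m => (i : ℕ) < n)
        = Finset.map (Fin.castLEEmb hnm) Finset.univ := by
      ext i
      simp only [Finset.mem_filter, Finset.mem_univ, true_and, Finset.mem_map]
      constructor
      · intro hi; exact ⟨⟨i, hi⟩, rfl⟩
      · rintro ⟨j, rfl⟩; simp
    rw [this, Finset.card_map, Finset.card_univ, Fintype.card_fin]
  -- key sum identity
  have key : ∑ i, (p i - c) * nsq (u i)
      = ∑ i ∈ Finset.univ.filter (fun i : Fin m => (i : ℕ) < n), (p i - c) := by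
    rw [← Finset.sum_filter_of_ne (p := fun i : Fin m => c < p i)
      (f := fun i => (p i - c) * nsq (u i))
      (by
        intro i _ hne
        by_contra hnc
        rcases lt_trichotomy (p i) c with h | h | h
        · exact hne (show (p i - c) * nsq (u i) = 0 by rw [h3 i h, mul_zero])
        · exact hne (show (p i - c) * nsq (u i) = 0 by rw [h, sub_self, zero_mul])
        · exact hnc h)]
    rw [← Finset.sum_filter_of_ne (p := fun i : Fin m => c < p i)
      (f := fun i => p i - c)
      (by
        intro i hi hne
        by_contra hnc
        simp only [Finset.mem_filter, Finset.mem_univ, true_and] at hi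
        have := hge i hi
        push_neg at hnc
        exact hne (show p i - c = 0 by linarith [le_antisymm hnc this])), Finset.filter_filter]
    have hset : Finset.univ.filter (fun i : Fin m => c < p i)
        = Finset.univ.filter (fun i : Fin m => (i : ℕ) < n ∧ c < p i) := by
      ext i
      simp only [Finset.mem_filter, Finset.mem_univ, true_and]
      exact ⟨fun h => ⟨hlt i h, h⟩, fun h => h.2⟩
    rw [hset]
    apply Finset.sum_congr rfl
    intro i hi
    simp only [Finset.mem_filter] at hi
    rw [h1 i hi.2.2, mul_one]
  have expand : ∑ i, p i * nsq (u i)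
      = ∑ i, (p i - c) * nsq (u i) + c * ∑ i, nsq (u i) := by
    rw [Finset.mul_sum, ← Finset.sum_add_distrib]
    apply Finset.sum_congr rfl
    intro i _; ring
  have expand2 : ∑ i ∈ Finset.univ.filter (fun i : Fin m => (i : ℕ) < n), p i
      = ∑ i ∈ Finset.univ.filter (fun i : Fin m => (i : ℕ) < n), (p i - c) + c * n := by
    have h' : ∑ i ∈ Finset.univ.filter (fun i : Fin m => (i : ℕ) < n), p i
        = ∑ i ∈ Finset.univ.filter (fun i : Fin m => (i : ℕ) < n), ((p i - c) + c) := by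
      apply Finset.sum_congr rfl; intro i _; ring
    rw [h', Finset.sum_add_distrib, Finset.sum_const, hcard, nsmul_eq_mul]
    ring
  rw [expand, htr, key, expand2]
end

section
/- Let p_1 ≥ ⋯ ≥ p_m > 0 with n < m and p_n > p_{n+1}. If a tight frame u_1,…,u_m in ℂ^n achieves Σ_i p_i ‖u_i‖² = Σ_{i=1}^n p_i, then u_i = 0 for all i > n and u_1,…,u_n form an orthonormal basis. -/
open Matrix

lemma star_dot_self_eq {n : ℕ} (v : Fin n → ℂ) :
    star v ⬝ᵥ v = ((∑ k, Complex.normSq (v k) : ℝ) : ℂ) := by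
  push_cast
  simp only [dotProduct, Pi.star_apply]
  refine Finset.sum_congr rfl fun k _ => ?_
  rw [Complex.star_def, ← Complex.normSq_eq_conj_mul_self]

lemma nsq_eq_sum {n : ℕ} (v : Fin n → ℂ) :
    nsq v = ∑ k, Complex.normSq (v k) := by
  rw [nsq, star_dot_self_eq, Complex.ofReal_re]

lemma nsq_nonneg {n : ℕ} (v : Fin n → ℂ) : 0 ≤ nsq v := by
  rw [nsq_eq_sum]
  exact Finset.sum_nonneg fun k _ => Complex.normSq_nonneg _

lemma star_dot_self_eq_nsq {n : ℕ} (v : Fin n → ℂ) :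
    star v ⬝ᵥ v = ((nsq v : ℝ) : ℂ) := by
  rw [star_dot_self_eq, nsq_eq_sum]

/-- When `p n > p (n+1)` (strict drop), any optimal tight frame is
pseudo-classical: `u i = 0` for `i > n` and `u 1, …, u n` are orthonormal. -/
theorem strict_drop_forces_pseudo_classical {n m : ℕ} (hnm : n < m) (hn : 0 < n)
    (p : Fin m → ℝ) (hp_pos : ∀ i, 0 < p i)
    (hp_mono : ∀ i j : Fin m, i ≤ j → p j ≤ p i)
    (hdrop : p ⟨n, hnm⟩ < p ⟨n - 1, by omega⟩)
    (u : Fin m → (Fin n → ℂ))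
    (hu : ∑ i, vecMulVec (u i) (star (u i)) = 1)
    (hopt : ∑ i, p i * nsq (u i) =
      ∑ i ∈ Finset.univ.filter (fun i : Fin m => (i : ℕ) < n), p i) :
    (∀ i : Fin m, n ≤ (i : ℕ) → u i = 0) ∧
    (∀ (i j : Fin m) (hi : (i : ℕ) < n) (hj : (j : ℕ) < n),
      star (u i) ⬝ᵥ u j = if i = j then 1 else 0) := by
  -- entrywise form of the tight-frame condition
  have hentry : ∀ k l : Fin n, (∑ i, u i k * star (u i l)) =
      (1 : Matrix (Fin n) (Fin n) ℂ) k l := by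
    intro k l
    have := congrFun (congrFun hu k) l
    simpa [Matrix.sum_apply, vecMulVec_apply] using this
  -- key identity: for any v, ⟨v,v⟩ = ∑ j |⟨u j, v⟩|²
  have hkey : ∀ v : Fin n → ℂ,
      star v ⬝ᵥ v = ∑ j, (star v ⬝ᵥ u j) * (star (u j) ⬝ᵥ v) := by
    intro v
    have step1 : ∑ j, (star v ⬝ᵥ u j) * (star (u j) ⬝ᵥ v)
        = ∑ j, ∑ k, ∑ l, star (v k) * v l * (u j k * star (u j l)) := by
      refine Finset.sum_congr rfl fun j _ => ?_
      simp only [dotProduct, Pi.star_apply, Finset.sum_mul_sum]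
      refine Finset.sum_congr rfl fun k _ => Finset.sum_congr rfl fun l _ => by ring
    rw [step1, Finset.sum_comm]
    have step2 : ∀ k : Fin n, ∑ j, ∑ l, star (v k) * v l * (u j k * star (u j l))
        = star (v k) * v k := by
      intro k
      rw [Finset.sum_comm]
      have : ∀ l : Fin n, ∑ j, star (v k) * v l * (u j k * star (u j l))
          = star (v k) * v l * (if k = l then 1 else 0) := by
        intro l
        rw [← Finset.mul_sum, hentry k l, Matrix.one_apply]
      simp only [this, mul_ite, mul_one, mul_zero]
      simp
    simp only [step2, dotProduct, Pi.star_apply]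
  have hkey2 : ∀ v : Fin n → ℂ,
      nsq v = ∑ j, Complex.normSq (star (u j) ⬝ᵥ v) := by
    intro v
    have h := hkey v
    have h2 : ∀ j : Fin m, (star v ⬝ᵥ u j) * (star (u j) ⬝ᵥ v)
        = ((Complex.normSq (star (u j) ⬝ᵥ v) : ℝ) : ℂ) := by
      intro j
      rw [star_dotProduct, Complex.normSq_eq_conj_mul_self]
      simp [Complex.star_def]
    rw [nsq, h]
    simp only [h2]
    push_cast
    rw [Complex.re_sum]
    simp
  set t : Fin m → ℝ := fun i => nsq (u i) with ht
  have ht0 : ∀ i, 0 ≤ t i := fun i => nsq_nonneg _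
  -- each k-entry distributes: ∑ i normSq (u i k) = 1
  have hdiag : ∀ k : Fin n, ∑ i, Complex.normSq (u i k) = 1 := by
    intro k
    have h := congrArg Complex.re (hentry k k)
    rw [Complex.re_sum] at h
    simpa [Complex.star_def, Complex.mul_conj] using h
  have hsum : ∑ i, t i = (n : ℝ) := by
    have : ∀ i, t i = ∑ k, Complex.normSq (u i k) := fun i => nsq_eq_sum _
    simp only [this]
    rw [Finset.sum_comm]
    simp [hdiag]
  have ht1 : ∀ i, t i ≤ 1 := by
    intro i
    have h := hkey2 (u i)
    have hterm : Complex.normSq (star (u i) ⬝ᵥ u i) = (t i) ^ 2 := by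
      rw [star_dot_self_eq_nsq, Complex.normSq_ofReal]; ring
    have hle : (t i) ^ 2 ≤ t i := by
      rw [ht] at *
      calc (nsq (u i)) ^ 2 = Complex.normSq (star (u i) ⬝ᵥ u i) := hterm.symm
        _ ≤ ∑ j, Complex.normSq (star (u j) ⬝ᵥ u i) :=
            Finset.single_le_sum (f := fun j => Complex.normSq (star (u j) ⬝ᵥ u i))
              (fun j _ => Complex.normSq_nonneg _) (Finset.mem_univ i)
        _ = nsq (u i) := h.symm
    nlinarith [ht0 i]
  -- cardinality of the low-index set
  have hcard : (Finset.univ.filter fun i : Fin m => (i : ℕ) < n).card = n := by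
    have heq : (Finset.univ.filter fun i : Fin m => (i : ℕ) < n)
        = Finset.map (Fin.castLEEmb hnm.le) Finset.univ := by
      ext i
      simp only [Finset.mem_filter, Finset.mem_univ, true_and, Finset.mem_map,
        Fin.castLEEmb, Function.Embedding.coeFn_mk]
      constructor
      · intro hi; exact ⟨⟨i, hi⟩, rfl⟩
      · rintro ⟨a, rfl⟩; exact a.isLt
    rw [heq, Finset.card_map, Finset.card_univ, Fintype.card_fin]
  set A := Finset.univ.filter (fun i : Fin m => (i : ℕ) < n) with hA
  set B := Finset.univ.filter (fun i : Fin m => ¬ (i : ℕ) < n) with hB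
  have hAB : ∀ f : Fin m → ℝ, ∑ i ∈ A, f i + ∑ i ∈ B, f i = ∑ i, f i := by
    intro f
    exact Finset.sum_filter_add_sum_filter_not _ _ _
  set S := ∑ i ∈ B, t i with hS
  have hS0 : 0 ≤ S := Finset.sum_nonneg fun i _ => ht0 i
  have hAsum : ∑ i ∈ A, (1 - t i) = S := by
    rw [Finset.sum_sub_distrib, Finset.sum_const, hcard, nsmul_eq_mul, mul_one]
    have := hAB t
    rw [hsum] at this
    linarith
  -- X = Y from optimality
  have hXY : ∑ i ∈ A, p i * (1 - t i) = ∑ i ∈ B, p i * t i := by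
    have h1 := hAB (fun i => p i * t i)
    rw [hopt] at h1
    have h2 : ∑ i ∈ A, p i * (1 - t i) = ∑ i ∈ A, p i - ∑ i ∈ A, p i * t i := by
      rw [← Finset.sum_sub_distrib]
      exact Finset.sum_congr rfl fun i _ => by ring
    rw [h2]
    linarith
  set c := p ⟨n - 1, by omega⟩ with hc
  set q := p ⟨n, hnm⟩ with hq
  have hiA : ∀ i ∈ A, c ≤ p i := by
    intro i hi
    rw [hA, Finset.mem_filter] at hi
    exact hp_mono i ⟨n - 1, by omega⟩ (by
      rw [Fin.le_def]; simpa using by omega)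
  have hiB : ∀ i ∈ B, p i ≤ q := by
    intro i hi
    rw [hB, Finset.mem_filter] at hi
    exact hp_mono ⟨n, hnm⟩ i (by
      rw [Fin.le_def]; simpa using by omega)
  have htA1 : ∀ i ∈ A, t i ≤ 1 := fun i _ => ht1 i
  have hX : c * S ≤ ∑ i ∈ A, p i * (1 - t i) := by
    rw [← hAsum, Finset.mul_sum]
    refine Finset.sum_le_sum fun i hi => ?_
    have := hiA i hi
    have := htA1 i hi
    nlinarith
  have hY : ∑ i ∈ B, p i * t i ≤ q * S := by
    rw [hS, Finset.mul_sum]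
    refine Finset.sum_le_sum fun i hi => ?_
    have := hiB i hi
    have := ht0 i
    nlinarith
  have hSz : S = 0 := by nlinarith [hXY, hX, hY, hdrop]
  have htB : ∀ i ∈ B, t i = 0 := by
    intro i hi
    have := (Finset.sum_eq_zero_iff_of_nonneg (fun i _ => ht0 i)).mp hSz
    exact this i hi
  have htA : ∀ i ∈ A, t i = 1 := by
    have hY0 : ∑ i ∈ B, p i * t i = 0 :=
      Finset.sum_eq_zero fun i hi => by rw [htB i hi, mul_zero]
    have hX0 : ∑ i ∈ A, p i * (1 - t i) = 0 := by rw [hXY, hY0]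
    intro i hi
    have := (Finset.sum_eq_zero_iff_of_nonneg (fun i hi => by
      have := hiA i hi; have := htA1 i hi; have := hp_pos i; nlinarith)).mp hX0 i hi
    have hpi := hp_pos i
    have : 1 - t i = 0 := by
      rcases mul_eq_zero.mp this with h | h
      · exact absurd h (ne_of_gt hpi)
      · exact h
    linarith
  -- conclusion part 1
  have hzero : ∀ i : Fin m, n ≤ (i : ℕ) → u i = 0 := by
    intro i hi
    have hti : t i = 0 := htB i (by rw [hB, Finset.mem_filter]; exact ⟨Finset.mem_univ i, by omega⟩)
    have : ∑ k, Complex.normSq (u i k) = 0 := by rw [← nsq_eq_sum]; exact hti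
    funext k
    have := (Finset.sum_eq_zero_iff_of_nonneg (fun k _ => Complex.normSq_nonneg _)).mp this k
      (Finset.mem_univ k)
    exact Complex.normSq_eq_zero.mp (this)
  refine ⟨hzero, ?_⟩
  -- orthogonality: for j < n and any w ≠ j, ⟨u w, u j⟩ = 0
  have horth : ∀ (j w : Fin m), (j : ℕ) < n → w ≠ j → star (u w) ⬝ᵥ u j = 0 := by
    intro j w hj hwj
    have htj : t j = 1 := htA j (by rw [hA, Finset.mem_filter]; exact ⟨Finset.mem_univ j, hj⟩)
    have h := hkey2 (u j)
    rw [← Finset.add_sum_erase _ _ (Finset.mem_univ j)] at h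
    have hjj : Complex.normSq (star (u j) ⬝ᵥ u j) = 1 := by
      rw [star_dot_self_eq_nsq]
      show Complex.normSq ((t j : ℝ) : ℂ) = 1
      rw [htj]; simp
    have hrest : ∑ w ∈ Finset.univ.erase j, Complex.normSq (star (u w) ⬝ᵥ u j) = 0 := by
      have hnj : nsq (u j) = 1 := htj
      linarith [h, hjj]
    have := (Finset.sum_eq_zero_iff_of_nonneg (fun w _ => Complex.normSq_nonneg _)).mp hrest w
      (Finset.mem_erase.mpr ⟨hwj, Finset.mem_univ w⟩)
    exact Complex.normSq_eq_zero.mp this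
  intro i j hi hj
  by_cases hij : i = j
  · subst hij
    simp only [if_pos rfl]
    rw [star_dot_self_eq_nsq]
    have : t i = 1 := htA i (by rw [hA, Finset.mem_filter]; exact ⟨Finset.mem_univ i, hi⟩)
    rw [show nsq (u i) = t i from rfl, this]
    simp
  · rw [if_neg hij]
    exact horth j i hj hij
end

section
/- Let p_1 ≥ ⋯ ≥ p_m > 0 with n ≤ m and let u_1,…,u_n be an orthonormal basis of ℂ^n. Consider the pseudo-classical setup Π_i = |u_i⟩⟨u_i|, ρ_i = |u_i⟩⟨u_i| for i ≤ n, Π_i = 0 for i > n, and for i > n set ρ_i = (Σ_{k=1}^n p_k)^{-1} Σ_{k=1}^n p_k |u_k⟩⟨u_k|. Then for every i ≤ n the posterior probability P_p(i) = p_i Tr(Π_i ρ_i)/(Σ_j p_j Tr(Π_i ρ_j)) equals Σ_{k=1}^n p_k. -/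
open Matrix

lemma trace_vv {n : ℕ} (a b c d : Fin n → ℂ) :
    (vecMulVec a b * vecMulVec c d).trace = (b ⬝ᵥ c) * (d ⬝ᵥ a) := by
  simp only [Matrix.trace, Matrix.diag, Matrix.mul_apply, vecMulVec_apply, dotProduct]
  rw [Finset.sum_mul_sum, Finset.sum_comm]
  exact Finset.sum_congr rfl fun i _ => Finset.sum_congr rfl fun j _ => by ring

/-- For the pseudo-classical setup with the mixed-state choice of `don't care`
states, the posterior probability of every possible outcome `i < n` equals
`Σ_{k<n} p k`, i.e. the effective worst-case posterior probability attains the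
upper bound `P_d`. -/
theorem dont_care_choice_posterior {n m : ℕ} (hnm : n ≤ m) (hn : 0 < n)
    (p : Fin m → ℝ) (hp_pos : ∀ i, 0 < p i) (hpsum : ∑ i, p i = 1)
    (hp_mono : ∀ i j : Fin m, i ≤ j → p j ≤ p i)
    (u : Fin n → (Fin n → ℂ))
    (hu : ∀ k l : Fin n, star (u k) ⬝ᵥ u l = if k = l then 1 else 0)
    (Pi ρ : Fin m → Matrix (Fin n) (Fin n) ℂ)
    (hPidef : ∀ i : Fin m, Pi i = if h : (i : ℕ) < n then
        vecMulVec (u ⟨i, h⟩) (star (u ⟨i, h⟩)) else 0)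
    (hρdef : ∀ i : Fin m, ρ i = if h : (i : ℕ) < n then
        vecMulVec (u ⟨i, h⟩) (star (u ⟨i, h⟩))
      else
        (((∑ k ∈ Finset.univ.filter (fun k : Fin m => (k : ℕ) < n), p k : ℝ) : ℂ))⁻¹ •
          ∑ k : Fin n, (p (Fin.castLE hnm k) : ℂ) • vecMulVec (u k) (star (u k))) :
    ∀ i : Fin m, (i : ℕ) < n →
      (p i * ((Pi i * ρ i).trace).re) / (∑ j, p j * ((Pi i * ρ j).trace).re) =
        ∑ k ∈ Finset.univ.filter (fun k : Fin m => (k : ℕ) < n), p k := by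
  intro i hi
  set F := Finset.univ.filter (fun k : Fin m => (k : ℕ) < n) with hF
  set S := ∑ k ∈ F, p k with hS
  have hiF : i ∈ F := by simp [hF, hi]
  have hSpos : 0 < S := Finset.sum_pos (fun k _ => hp_pos k) ⟨i, hiF⟩
  have hSne : S ≠ 0 := ne_of_gt hSpos
  have htr1 : ∀ j : Fin m, ∀ hj : (j : ℕ) < n,
      ((Pi i * ρ j).trace).re = if i = j then 1 else 0 := by
    intro j hj
    rw [hPidef, hρdef]
    simp only [hi, hj, dif_pos]
    rw [trace_vv, hu, hu]
    by_cases h : i = j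
    · subst h; simp
    · have h1 : (⟨i, hi⟩ : Fin n) ≠ ⟨j, hj⟩ := by
        simp only [ne_eq, Fin.mk.injEq]
        exact fun hh => h (Fin.ext hh)
      simp [h, h1, Ne.symm h1]
  have htr2 : ∀ j : Fin m, ¬ (j : ℕ) < n →
      ((Pi i * ρ j).trace).re = S⁻¹ * p i := by
    intro j hj
    rw [hPidef, hρdef]
    simp only [hi, dif_pos, hj, dif_neg, not_false_iff]
    rw [Matrix.mul_smul, Matrix.mul_sum, Matrix.trace_smul, Matrix.trace_sum]
    have hterm : ∀ k : Fin n,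
        (vecMulVec (u ⟨i, hi⟩) (star (u ⟨i, hi⟩)) * vecMulVec (u k) (star (u k))).trace
          = if (⟨i, hi⟩ : Fin n) = k then 1 else 0 := by
      intro k
      rw [trace_vv, hu, hu]
      by_cases h : (⟨i, hi⟩ : Fin n) = k
      · simp [h]
      · simp [h, Ne.symm h]
    simp only [Matrix.mul_smul, Matrix.trace_smul, hterm, smul_ite, smul_zero,
      Finset.sum_ite_eq, Finset.mem_univ, if_true]
    have hcast : Fin.castLE hnm (⟨i, hi⟩ : Fin n) = i := Fin.ext rfl
    rw [hcast]
    simp [smul_eq_mul, ← Complex.ofReal_inv, ← Complex.ofReal_mul]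
  have hnot : ∑ j ∈ Finset.univ.filter (fun j : Fin m => ¬ (j : ℕ) < n), p j = 1 - S := by
    have := Finset.sum_filter_add_sum_filter_not Finset.univ (fun j : Fin m => (j : ℕ) < n) p
    rw [hpsum] at this
    rw [← hF] at this
    linarith [this]
  have hden : (∑ j, p j * ((Pi i * ρ j).trace).re) = p i / S := by
    rw [← Finset.sum_filter_add_sum_filter_not Finset.univ (fun j : Fin m => (j : ℕ) < n)]
    have h1 : ∑ j ∈ Finset.univ.filter (fun j : Fin m => (j : ℕ) < n),
        p j * ((Pi i * ρ j).trace).re = p i := by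
      rw [Finset.sum_congr rfl (fun j hj => by
        rw [htr1 j (by simpa [hF] using hj)])]
      simp only [mul_ite, mul_one, mul_zero]
      rw [Finset.sum_ite_eq]
      rw [← hF]
      simp [hiF]
    have h2 : ∑ j ∈ Finset.univ.filter (fun j : Fin m => ¬ (j : ℕ) < n),
        p j * ((Pi i * ρ j).trace).re = (1 - S) * (S⁻¹ * p i) := by
      rw [Finset.sum_congr rfl (fun j hj => by
        rw [htr2 j (by simpa using (Finset.mem_filter.mp hj).2)])]
      rw [← Finset.sum_mul, hnot]
    rw [h1, h2]
    field_simp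
    ring
  rw [htr1 i hi, if_pos rfl, hden, mul_one]
  rw [div_div_eq_mul_div, div_eq_iff (ne_of_gt (hp_pos i))]
  ring
end
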